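/- arXiv:1306.4483 — 3 statements merged into one kernel-verified Lean document; each statement's English description precedes it below -/
import Mathlib

section
/- The specialized Vámos polynomial h₄ is hyperbolic with respect to e = (1,1,0,0), i.e., h₄(e) ≠ 0 and for every v ∈ ℝ⁴ the univariate polynomial t ↦ h₄(t·e + v) has only real roots. -/
open MvPolynomial Polynomial Matrix

noncomputable def univPoly {n : ℕ} (h : MvPolynomial (Fin n) ℝ) (e v : Fin n → ℝ) : Polynomial ℝ :=
  MvPolynomial.aeval (fun i => Polynomial.C (v i) + Polynomial.C (e i) * Polynomial.X) h

def RealRooted (p : Polynomial ℝ) : Prop :=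
  ∀ z : ℂ, (p.map (algebraMap ℝ ℂ)).IsRoot z → z.im = 0

def Hyperbolic {n : ℕ} (h : MvPolynomial (Fin n) ℝ) (e : Fin n → ℝ) : Prop :=
  MvPolynomial.eval e h ≠ 0 ∧ ∀ v : Fin n → ℝ, RealRooted (univPoly h e v)

def hypCone {n : ℕ} (h : MvPolynomial (Fin n) ℝ) (e : Fin n → ℝ) : Set (Fin n → ℝ) :=
  {v | ∀ t : ℝ, (univPoly h e v).IsRoot t → t ≤ 0}

noncomputable def h4 : MvPolynomial (Fin 4) ℝ :=
  X 0 ^ 2 * X 1 ^ 2 + 4 * (X 0 + X 1 + X 2 + X 3) *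
    (X 0 * X 1 * X 2 + X 0 * X 1 * X 3 + X 0 * X 2 * X 3 + X 1 * X 2 * X 3)

noncomputable def e4 : Fin 4 → ℝ := ![1, 1, 0, 0]

/-!
Put `x₁ = w + m`, `x₂ = w - m`, `σ = x₃ + x₄`, `p = x₃ x₄`; then `4p ≤ σ²` and `h4` restricted
to a line in direction `e4` is a monic quartic `f` in `w`. At `w = -σ/2` it equals
`(σ²/4 - m²)² ≥ 0`, while (for `m, σ ≥ 0`, which is no loss) it is `≤ 0` at `-σ/2 ∓ m` when
`σ ≤ 2m` and at `-σ` and `0` when `2m ≤ σ` (for `m = σ = 0`, `f = w²(w² + 16p)` with `p ≤ 0`).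
A monic quartic with such a sign pattern has only real roots.
-/

open Complex

lemma Complex.eq_zero_of_ofReal_mul_add_ofReal_eq_zero {z : ℂ} (hz : z.im ≠ 0) {a b : ℝ}
    (h : (a : ℂ) * z + b = 0) : a = 0 ∧ b = 0 := by
  have ha : a = 0 := by
    have him : a * z.im = 0 := by simpa using congrArg Complex.im h
    exact (mul_eq_zero.mp him).resolve_right hz
  refine ⟨ha, ?_⟩
  simpa [ha] using congrArg Complex.re h

/-- Dividing by `(X - z) (X - conj z)` leaves a real quadratic quotient and a remainder that
vanishes, being a real linear polynomial with the non-real root `z`. -/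
lemma exists_quadratic_factor_of_quartic_root {c₃ c₂ c₁ c₀ : ℝ} {z : ℂ} (hz_im : z.im ≠ 0)
    (hz : z ^ 4 + c₃ * z ^ 3 + c₂ * z ^ 2 + c₁ * z + c₀ = 0) :
    ∃ b c : ℝ, ∀ t : ℝ, t ^ 4 + c₃ * t ^ 3 + c₂ * t ^ 2 + c₁ * t + c₀ =
      ((t - z.re) ^ 2 + z.im ^ 2) * (t ^ 2 + b * t + c) := by
  set ρ := z.re
  set N := normSq z
  obtain ⟨b, hb⟩ : ∃ b : ℝ, b = c₃ + 2 * ρ := ⟨_, rfl⟩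
  obtain ⟨c, hc⟩ : ∃ c : ℝ, c = c₂ + 2 * ρ * b - N := ⟨_, rfl⟩
  have hD : z ^ 2 - 2 * ρ * z + N = 0 := by
    have hsum := add_conj z
    have hprod := mul_conj z
    push_cast at hsum
    linear_combination z * hsum - hprod
  have hrem : ((c₁ - N * b + 2 * ρ * c : ℝ) : ℂ) * z + ((c₀ - N * c : ℝ) : ℂ) = 0 := by
    have hbC : (b : ℂ) = c₃ + 2 * ρ := by exact_mod_cast hb
    have hcC : (c : ℂ) = c₂ + 2 * ρ * b - N := by exact_mod_cast hc
    push_cast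
    linear_combination hz - (z ^ 2 + b * z + c) * hD + z ^ 3 * hbC + z ^ 2 * hcC
  obtain ⟨h₁, h₀⟩ := Complex.eq_zero_of_ofReal_mul_add_ofReal_eq_zero hz_im hrem
  have hN : N = ρ ^ 2 + z.im ^ 2 := by simp only [N, ρ, normSq_apply]; ring
  exact ⟨b, c, fun t => by
    linear_combination t * h₁ + h₀ + (t ^ 2 + b * t + c) * hN - t ^ 3 * hb - t ^ 2 * hc⟩

/-- After dividing out a conjugate pair of roots, the quotient would be a monic, hence strictly
convex, quadratic with the same sign pattern. -/
theorem im_eq_zero_of_quartic_sign_changes {c₃ c₂ c₁ c₀ x₁ x₂ x₃ : ℝ}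
    (h₁₂ : x₁ < x₂) (h₂₃ : x₂ < x₃)
    (h₁ : x₁ ^ 4 + c₃ * x₁ ^ 3 + c₂ * x₁ ^ 2 + c₁ * x₁ + c₀ ≤ 0)
    (h₂ : 0 ≤ x₂ ^ 4 + c₃ * x₂ ^ 3 + c₂ * x₂ ^ 2 + c₁ * x₂ + c₀)
    (h₃ : x₃ ^ 4 + c₃ * x₃ ^ 3 + c₂ * x₃ ^ 2 + c₁ * x₃ + c₀ ≤ 0)
    {z : ℂ} (hz : z ^ 4 + c₃ * z ^ 3 + c₂ * z ^ 2 + c₁ * z + c₀ = 0) : z.im = 0 := by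
  by_contra hz_im
  obtain ⟨b, c, hfac⟩ := exists_quadratic_factor_of_quartic_root hz_im hz
  have hD : ∀ t : ℝ, 0 < (t - z.re) ^ 2 + z.im ^ 2 := fun t =>
    add_pos_of_nonneg_of_pos (sq_nonneg _) (sq_pos_iff.2 hz_im)
  rw [hfac] at h₁ h₂ h₃
  have q₁ := nonpos_of_mul_nonpos_right h₁ (hD x₁)
  have q₂ := nonneg_of_mul_nonneg_right h₂ (hD x₂)
  have q₃ := nonpos_of_mul_nonpos_right h₃ (hD x₃)
  have hconvex : (x₂ - x₁) * (x₃ ^ 2 + b * x₃ + c) + (x₃ - x₂) * (x₁ ^ 2 + b * x₁ + c)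
      - (x₃ - x₁) * (x₂ ^ 2 + b * x₂ + c) = (x₃ - x₁) * (x₂ - x₁) * (x₃ - x₂) := by ring
  nlinarith [mul_nonpos_of_nonneg_of_nonpos (sub_nonneg.2 h₁₂.le) q₃,
    mul_nonpos_of_nonneg_of_nonpos (sub_nonneg.2 h₂₃.le) q₁,
    mul_nonneg (sub_nonneg.2 (h₁₂.trans h₂₃).le) q₂,
    mul_pos (mul_pos (sub_pos.2 (h₁₂.trans h₂₃)) (sub_pos.2 h₁₂)) (sub_pos.2 h₂₃)]

lemma Complex.im_eq_zero_of_sq_eq_ofReal {z : ℂ} {r : ℝ} (hr : 0 ≤ r) (h : z ^ 2 = r) :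
    z.im = 0 := by
  have hre : z.re ^ 2 - z.im ^ 2 = r := by simpa [sq] using congrArg re h
  have him : z.re * z.im = 0 := by
    have h' := congrArg im h
    simp only [sq, mul_im, ofReal_im] at h'
    linarith
  rcases mul_eq_zero.mp him with h0 | h0
  · nlinarith [sq_nonneg z.im]
  · exact h0

/-- `h4` at `(w + m, w - m, x₃, x₄)`, where `σ = x₃ + x₄` and `p = x₃ x₄`. -/
def vamosQuartic {R : Type*} [CommRing R] (m σ p w : R) : R :=
  (w ^ 2 - m ^ 2) ^ 2 + 4 * (2 * w + σ) * (σ * (w ^ 2 - m ^ 2) + 2 * p * w)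

section vamosQuartic

variable {R : Type*} [CommRing R]

lemma vamosQuartic_eq (m σ p w : R) :
    vamosQuartic m σ p w = w ^ 4 + 8 * σ * w ^ 3 + (4 * σ ^ 2 + 16 * p - 2 * m ^ 2) * w ^ 2 +
      (8 * p * σ - 8 * σ * m ^ 2) * w + (m ^ 4 - 4 * σ ^ 2 * m ^ 2) := by
  unfold vamosQuartic; ring

lemma vamosQuartic_neg_left (m σ p w : R) : vamosQuartic (-m) σ p w = vamosQuartic m σ p w := by
  unfold vamosQuartic; ring

lemma vamosQuartic_neg_neg (m σ p w : R) :
    vamosQuartic m (-σ) p (-w) = vamosQuartic m σ p w := by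
  unfold vamosQuartic; ring

end vamosQuartic

lemma vamosQuartic_neg_half (m σ p : ℝ) :
    vamosQuartic m σ p (-σ / 2) = (σ ^ 2 / 4 - m ^ 2) ^ 2 := by
  unfold vamosQuartic; ring

lemma vamosQuartic_neg_half_sub_nonpos {m σ p : ℝ} (hσ : 0 ≤ σ) (hσm : σ ≤ 2 * m)
    (hp : 4 * p ≤ σ ^ 2) : vamosQuartic m σ p (-σ / 2 - m) ≤ 0 := by
  have hm : 0 ≤ m := by linarith
  have key : vamosQuartic m σ p (-σ / 2 - m) =
      σ ^ 2 * (σ / 4 + m) * (σ / 4 - 7 * m) + 8 * p * m * (2 * m + σ) := by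
    unfold vamosQuartic; ring
  nlinarith [mul_le_mul_of_nonneg_right hp (by positivity : 0 ≤ 2 * m * (2 * m + σ)),
    mul_nonneg (sq_nonneg σ) (by nlinarith : 0 ≤ 3 * m ^ 2 - σ * m / 2 - σ ^ 2 / 16)]

lemma vamosQuartic_neg_half_add_nonpos {m σ p : ℝ} (hσ : 0 ≤ σ) (hσm : σ ≤ 2 * m)
    (hp : 4 * p ≤ σ ^ 2) : vamosQuartic m σ p (-σ / 2 + m) ≤ 0 := by
  have hm : 0 ≤ m := by linarith
  have key : vamosQuartic m σ p (-σ / 2 + m) =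
      σ ^ 2 * (σ / 4 - m) * (σ / 4 + 7 * m) + 8 * p * m * (2 * m - σ) := by
    unfold vamosQuartic; ring
  nlinarith [mul_le_mul_of_nonneg_right hp (mul_nonneg hm (by linarith : 0 ≤ 2 * m - σ)),
    mul_nonneg (sq_nonneg σ) (by nlinarith : 0 ≤ 3 * m ^ 2 + σ * m / 2 - σ ^ 2 / 16)]

lemma vamosQuartic_neg_nonpos {m σ p : ℝ} (hm : 0 ≤ m) (hσm : 2 * m ≤ σ)
    (hp : 4 * p ≤ σ ^ 2) : vamosQuartic m σ p (-σ) ≤ 0 := by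
  have key : vamosQuartic m σ p (-σ) = 8 * p * σ ^ 2 - (σ ^ 2 - m ^ 2) * (3 * σ ^ 2 + m ^ 2) := by
    unfold vamosQuartic; ring
  nlinarith [mul_le_mul_of_nonneg_right hp (sq_nonneg σ),
    mul_le_mul hσm hσm (by positivity) (by linarith)]

lemma vamosQuartic_zero_nonpos {m σ p : ℝ} (hm : 0 ≤ m) (hσm : 2 * m ≤ σ) :
    vamosQuartic m σ p 0 ≤ 0 := by
  have key : vamosQuartic m σ p 0 = m ^ 2 * (m ^ 2 - 4 * σ ^ 2) := by
    unfold vamosQuartic; ring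
  nlinarith [mul_nonneg (sq_nonneg m) (by nlinarith : 0 ≤ 4 * σ ^ 2 - m ^ 2)]

lemma vamosQuartic_im_eq_zero_of_sign_changes {m σ p x₁ x₂ x₃ : ℝ} (h₁₂ : x₁ < x₂) (h₂₃ : x₂ < x₃)
    (h₁ : vamosQuartic m σ p x₁ ≤ 0) (h₂ : 0 ≤ vamosQuartic m σ p x₂)
    (h₃ : vamosQuartic m σ p x₃ ≤ 0) {z : ℂ} (hz : vamosQuartic (m : ℂ) σ p z = 0) :
    z.im = 0 := by
  rw [vamosQuartic_eq] at h₁ h₂ h₃ hz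
  exact im_eq_zero_of_quartic_sign_changes h₁₂ h₂₃ h₁ h₂ h₃ (by push_cast; exact hz)

lemma vamosQuartic_zero_zero_im_eq_zero {p : ℝ} (hp : p ≤ 0) {z : ℂ}
    (hz : vamosQuartic 0 0 (p : ℂ) z = 0) : z.im = 0 := by
  have hfac : z ^ 2 * (z ^ 2 - ((-16 * p : ℝ) : ℂ)) = 0 := by
    unfold vamosQuartic at hz; push_cast; linear_combination hz
  rcases mul_eq_zero.mp hfac with h | h
  · simp [pow_eq_zero_iff two_ne_zero |>.mp h]
  · exact Complex.im_eq_zero_of_sq_eq_ofReal (by linarith) (sub_eq_zero.mp h)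

theorem vamosQuartic_im_eq_zero {m σ p : ℝ} (hp : 4 * p ≤ σ ^ 2) {z : ℂ}
    (hz : vamosQuartic (m : ℂ) σ p z = 0) : z.im = 0 := by
  wlog hm : 0 ≤ m generalizing m
  · exact this (m := -m) (by rwa [ofReal_neg, vamosQuartic_neg_left]) (by linarith)
  wlog hσ : 0 ≤ σ generalizing σ z
  · simpa using this (σ := -σ) (z := -z) (by simpa using hp)
      (by rwa [ofReal_neg, vamosQuartic_neg_neg]) (by linarith)
  rcases le_total σ (2 * m) with hσm | hσm
  · rcases hm.eq_or_lt with rfl | hm₀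
    · obtain rfl : σ = 0 := by linarith
      exact vamosQuartic_zero_zero_im_eq_zero (by linarith) hz
    exact vamosQuartic_im_eq_zero_of_sign_changes (by linarith) (by linarith)
      (vamosQuartic_neg_half_sub_nonpos hσ hσm hp)
      (vamosQuartic_neg_half m σ p ▸ sq_nonneg _)
      (vamosQuartic_neg_half_add_nonpos hσ hσm hp) hz
  · rcases hσ.eq_or_lt with rfl | hσ₀
    · obtain rfl : m = 0 := by linarith
      exact vamosQuartic_zero_zero_im_eq_zero (by linarith) hz
    exact vamosQuartic_im_eq_zero_of_sign_changes (by linarith) (by linarith)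
      (vamosQuartic_neg_nonpos hm hσm hp)
      (vamosQuartic_neg_half m σ p ▸ sq_nonneg _)
      (vamosQuartic_zero_nonpos hm hσm) hz

lemma eval_map_univPoly_h4 (v : Fin 4 → ℝ) (z : ℂ) :
    ((univPoly h4 e4 v).map (algebraMap ℝ ℂ)).eval z =
      vamosQuartic (((v 0 - v 1) / 2 : ℝ) : ℂ) (v 2 + v 3 : ℝ) (v 2 * v 3 : ℝ)
        (z + ((v 0 + v 1) / 2 : ℝ)) := by
  simp only [univPoly, h4, e4, Polynomial.eval_map, map_add, map_mul, map_pow, map_ofNat,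
    MvPolynomial.aeval_X, Matrix.cons_val_zero, Matrix.cons_val_one, Matrix.cons_val_two,
    Matrix.cons_val_three, Matrix.head_cons, Matrix.tail_cons, Polynomial.eval₂_add,
    Polynomial.eval₂_mul, Polynomial.eval₂_pow, Polynomial.eval₂_C, Polynomial.eval₂_X,
    Polynomial.eval₂_ofNat, Complex.coe_algebraMap]
  unfold vamosQuartic
  push_cast
  ring

theorem stmt2 : Hyperbolic h4 e4 := by
  refine ⟨by simp [h4, e4], fun v z hz => ?_⟩
  have hp : 4 * (v 2 * v 3) ≤ (v 2 + v 3) ^ 2 :=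
    mul_assoc 4 (v 2) (v 3) ▸ four_mul_le_sq_add (v 2) (v 3)
  have hw := vamosQuartic_im_eq_zero hp ((eval_map_univPoly_h4 v z).symm.trans hz)
  simpa using hw
end

section
/- Hyperbolicity cones are convex cones: if h is hyperbolic with respect to e, then the set Λ(h,e) = {v ∈ ℝⁿ : no root of t ↦ h(te+v) is strictly positive} is a convex cone. -/
open MvPolynomial Polynomial Matrix

/-!
Write the cone as `Λ = {v | h (e + s • v) ≠ 0 for all s ≥ 0}`: by homogeneity a positive root `t`
of `h (v + t • e)` is the same as the zero `s = t⁻¹` of `s ↦ h (e + s • v)`.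

The roots of a polynomial of fixed degree move continuously with its coefficients, so along a
continuous family of such polynomials whose roots never cross a given curve, the roots stay on the
side where they start. Two such deformations give Gårding's argument.
* If `h` does not vanish on the segment `[e, w]`, then `h` is hyperbolic with respect to `w`: for
  `s > 0` the roots `τ` of `h (x + i s e + τ w)` have negative imaginary part (deform `w` back to
  `e`; no root can become real, by hyperbolicity in direction `e`), and letting `s → 0`, together
  with the symmetry of the roots under conjugation, forces them to be real.
* For `u, v ∈ Λ` the direction `w = e + u` is of this kind, and the real roots of
  `τ ↦ h (e + μ v + τ w)` never vanish for `μ ∈ [0, 1]` and are negative at `μ = 0`. Hence `τ = 1`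
  is not a root at `μ = 1`, that is `h (2 e + u + v) ≠ 0`, which after rescaling is `u + v ∈ Λ`.
-/

open Filter Topology Set

namespace Polynomial

lemma cauchyBound_le_one_add_sum {K : Type*} [NormedDivisionRing K] (p : K[X]) :
    (cauchyBound p : ℝ) ≤
      1 + (∑ j ∈ Finset.range p.natDegree, ‖p.coeff j‖) / ‖p.leadingCoeff‖ := by
  have hsup : (Finset.range p.natDegree).sup (‖p.coeff ·‖₊) ≤
      ∑ j ∈ Finset.range p.natDegree, ‖p.coeff j‖₊ :=
    Finset.sup_le fun _ hj => Finset.single_le_sum (f := (‖p.coeff ·‖₊)) (fun _ _ => zero_le) hj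
  rw [cauchyBound, add_comm, NNReal.coe_add, NNReal.coe_one, NNReal.coe_div, coe_nnnorm]
  gcongr
  simpa using NNReal.coe_le_coe.mpr hsup

lemma norm_leadingCoeff_mul_pow_le_norm_eval {K : Type*} [NormedField K] [IsAlgClosed K]
    (p : K[X]) {z : K} {r : ℝ} (hr : 0 ≤ r) (h : ∀ w ∈ p.roots, r ≤ ‖z - w‖) :
    ‖p.leadingCoeff‖ * r ^ p.natDegree ≤ ‖p.eval z‖ := by
  conv_rhs => rw [(IsAlgClosed.splits p).eq_prod_roots]
  rw [eval_mul, eval_C, eval_multiset_prod, norm_mul, ← IsAlgClosed.card_roots_eq_natDegree,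
    ← normHom_apply (_ : Multiset K).prod, map_multiset_prod, Multiset.map_map, Multiset.map_map]
  gcongr
  simpa using Multiset.prod_map_le_prod_map₀ (fun _ => r) _ (fun _ _ => hr) (by simpa using h)

lemma tendsto_eval_of_tendsto_coeff {R ι : Type*} [Semiring R] [TopologicalSpace R]
    [IsTopologicalSemiring R] {l : Filter ι} {p : ι → R[X]} {q : R[X]} {d : ℕ}
    (hp : ∀ i, (p i).natDegree ≤ d) (hq : q.natDegree ≤ d)
    (hpq : ∀ j, Tendsto (fun i => (p i).coeff j) l (𝓝 (q.coeff j))) {z : ι → R} {ζ : R}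
    (hz : Tendsto z l (𝓝 ζ)) : Tendsto (fun i => (p i).eval (z i)) l (𝓝 (q.eval ζ)) := by
  simp only [eval_eq_sum_range' (Nat.lt_succ_of_le (hp _)),
    eval_eq_sum_range' (Nat.lt_succ_of_le hq)]
  exact tendsto_finsetSum _ fun j _ => (hpq j).mul (hz.pow j)

section Limits

variable {K : Type*} [NormedField K] {p : ℕ → K[X]} {q : K[X]} {d : ℕ}

lemma exists_forall_norm_le_of_tendsto_coeff (hp : ∀ k, (p k).degree = d) (hq : q.degree = d)
    (hpq : ∀ j, Tendsto (fun k => (p k).coeff j) atTop (𝓝 (q.coeff j))) :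
    ∃ R, ∀ k z, (p k).IsRoot z → ‖z‖ ≤ R := by
  have hlim : Tendsto (fun k => 1 + (∑ j ∈ Finset.range d, ‖(p k).coeff j‖) / ‖(p k).coeff d‖)
      atTop (𝓝 (1 + (∑ j ∈ Finset.range d, ‖q.coeff j‖) / ‖q.coeff d‖)) :=
    tendsto_const_nhds.add <| (tendsto_finsetSum _ fun j _ => (hpq j).norm).div (hpq d).norm
      (norm_ne_zero_iff.mpr (coeff_ne_zero_of_eq_degree hq))
  obtain ⟨R, hR⟩ := hlim.bddAbove_range
  refine ⟨R, fun k z hz => ?_⟩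
  have hp0 : p k ≠ 0 := fun h0 => by simpa [h0] using hp k
  have hroot := IsRoot.norm_lt_cauchyBound hp0 hz
  have hbound := cauchyBound_le_one_add_sum (p k)
  rw [leadingCoeff, natDegree_eq_of_degree_eq_some (hp k)] at hbound
  exact (NNReal.coe_lt_coe.mpr hroot).le.trans (hbound.trans (hR (mem_range_self k)))

lemma mem_of_isRoot_of_tendsto_coeff [IsAlgClosed K] (hp : ∀ k, (p k).degree = d)
    (hq : q.degree = d) (hpq : ∀ j, Tendsto (fun k => (p k).coeff j) atTop (𝓝 (q.coeff j)))
    {S : Set K} (hS : IsClosed S) (hroots : ∀ k z, (p k).IsRoot z → z ∈ S) {z : K}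
    (hz : q.IsRoot z) : z ∈ S := by
  by_contra hzS
  obtain ⟨r, hr, hball⟩ := Metric.isOpen_iff.mp hS.isOpen_compl z hzS
  have hlower : ∀ k, ‖(p k).coeff d‖ * r ^ d ≤ ‖(p k).eval z‖ := fun k => by
    have h := norm_leadingCoeff_mul_pow_le_norm_eval (p k) hr.le fun w hw => by
      have hwS := hroots k w (isRoot_of_mem_roots hw)
      by_contra! hlt
      exact hball (by simpa [dist_comm, dist_eq_norm] using hlt) hwS
    rwa [leadingCoeff, natDegree_eq_of_degree_eq_some (hp k)] at h
  have hle := le_of_tendsto_of_tendsto' ((hpq d).norm.mul_const _)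
    (tendsto_eval_of_tendsto_coeff (fun k => (natDegree_eq_of_degree_eq_some (hp k)).le)
      (natDegree_eq_of_degree_eq_some hq).le hpq tendsto_const_nhds).norm hlower
  rw [hz.eq_zero, norm_zero] at hle
  exact (mul_pos (norm_pos_iff.mpr (coeff_ne_zero_of_eq_degree hq)) (pow_pos hr d)).not_ge hle

lemma exists_mem_isRoot_of_tendsto_coeff [ProperSpace K] (hp : ∀ k, (p k).degree = d)
    (hq : q.degree = d) (hpq : ∀ j, Tendsto (fun k => (p k).coeff j) atTop (𝓝 (q.coeff j)))
    {T : Set K} (hT : IsClosed T) {z : ℕ → K} (hz : ∀ k, (p k).IsRoot (z k))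
    (hzT : ∀ k, z k ∈ T) : ∃ ζ ∈ T, q.IsRoot ζ := by
  obtain ⟨R, hR⟩ := exists_forall_norm_le_of_tendsto_coeff hp hq hpq
  obtain ⟨ζ, -, φ, hφ, hζ⟩ := tendsto_subseq_of_bounded
    (Metric.isBounded_closedBall (x := 0) (r := R))
    fun k => mem_closedBall_zero_iff.mpr (hR k _ (hz k))
  refine ⟨ζ, hT.mem_of_tendsto hζ (.of_forall fun k => hzT _), ?_⟩
  refine tendsto_nhds_unique (tendsto_eval_of_tendsto_coeff
    (fun k => (natDegree_eq_of_degree_eq_some (hp (φ k))).le)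
    (natDegree_eq_of_degree_eq_some hq).le (fun j => (hpq j).comp hφ.tendsto_atTop) hζ) ?_
  simp [(hz _).eq_zero]

end Limits

theorem mem_of_isRoot_of_homotopy {K : Type*} [NormedField K] [IsAlgClosed K] [ProperSpace K]
    {P : ℝ → K[X]} {d : ℕ} {U V : Set K} (hU : IsOpen U) (hV : IsOpen V) (hUV : Disjoint U V)
    (hcont : ∀ j, Continuous fun t => (P t).coeff j)
    (hdeg : ∀ t ∈ Icc (0 : ℝ) 1, (P t).degree = d)
    (hroots : ∀ t ∈ Icc (0 : ℝ) 1, ∀ z, (P t).IsRoot z → z ∈ U ∪ V)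
    (h0 : ∀ z, (P 0).IsRoot z → z ∈ U) {z : K} (hz : (P 1).IsRoot z) : z ∈ U := by
  set A := {t ∈ Icc (0 : ℝ) 1 | ∀ z, (P t).IsRoot z → z ∈ U}
  set B := {t ∈ Icc (0 : ℝ) 1 | ∃ z, (P t).IsRoot z ∧ z ∈ V}
  have hlim {u : ℕ → ℝ} {l : ℝ} (hu : Tendsto u atTop (𝓝 l)) (j : ℕ) :
      Tendsto (fun k => (P (u k)).coeff j) atTop (𝓝 ((P l).coeff j)) :=
    ((hcont j).tendsto l).comp hu
  have hA : IsClosed A := IsSeqClosed.isClosed fun {u l} hu hul => by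
    have hl : l ∈ Icc (0 : ℝ) 1 :=
      isClosed_Icc.mem_of_tendsto hul (.of_forall fun k => (hu k).1)
    refine ⟨hl, fun z hz => (hroots l hl z hz).resolve_right ?_⟩
    exact mem_of_isRoot_of_tendsto_coeff (fun k => hdeg _ (hu k).1) (hdeg l hl) (hlim hul)
      hV.isClosed_compl (fun k z hz => hUV.subset_compl_right ((hu k).2 z hz)) hz
  have hB : IsClosed B := IsSeqClosed.isClosed fun {u l} hu hul => by
    have hl : l ∈ Icc (0 : ℝ) 1 :=
      isClosed_Icc.mem_of_tendsto hul (.of_forall fun k => (hu k).1)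
    choose z hz hzV using fun k => (hu k).2
    obtain ⟨ζ, hζU, hζ⟩ := exists_mem_isRoot_of_tendsto_coeff (fun k => hdeg _ (hu k).1)
      (hdeg l hl) (hlim hul) hU.isClosed_compl hz (fun k => hUV.subset_compl_left (hzV k))
    exact ⟨hl, ζ, hζ, (hroots l hl ζ hζ).resolve_left hζU⟩
  by_contra hzU
  have hcover : Icc (0 : ℝ) 1 ⊆ A ∪ B := fun t ht => by
    by_cases htB : ∃ w, (P t).IsRoot w ∧ w ∈ V
    · exact Or.inr ⟨ht, htB⟩
    · exact Or.inl ⟨ht, fun w hw =>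
        (hroots t ht w hw).resolve_right fun hwV => htB ⟨w, hw, hwV⟩⟩
  obtain ⟨t, -, htA, -, w, hw, hwV⟩ := isPreconnected_closed_iff.mp isPreconnected_Icc A B hA hB
    hcover ⟨0, left_mem_Icc.mpr zero_le_one, left_mem_Icc.mpr zero_le_one, h0⟩
    ⟨1, right_mem_Icc.mpr zero_le_one, right_mem_Icc.mpr zero_le_one, z, hz,
      (hroots 1 (right_mem_Icc.mpr zero_le_one) z hz).resolve_left hzU⟩
  exact hUV.ne_of_mem (htA.2 w hw) hwV rfl

end Polynomial

lemma Finsupp.prod_map_toMultiset {σ M : Type*} [CommMonoid M] (α : σ →₀ ℕ) (g : σ → M) :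
    (α.toMultiset.map g).prod = α.prod fun i n => g i ^ n := by
  rw [Finsupp.toMultiset_map, Finsupp.prod_toMultiset,
    Finsupp.prod_mapDomain_index pow_zero pow_add]

namespace MvPolynomial

variable {σ R A : Type*} [CommSemiring R] [CommSemiring A] [Algebra R A]
  {f : MvPolynomial σ R} {d k : ℕ} {L : σ → A[X]}

lemma card_toMultiset_of_isHomogeneous (hf : f.IsHomogeneous d) {α : σ →₀ ℕ}
    (hα : α ∈ f.support) : Multiset.card α.toMultiset = d := by
  rw [Finsupp.card_toMultiset, ← hf (mem_support_iff.mp hα), Finsupp.weight_apply]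
  simp [Finsupp.sum]

lemma natDegree_aeval_le_of_isHomogeneous (hf : f.IsHomogeneous d)
    (hL : ∀ i, (L i).natDegree ≤ k) : (aeval L f).natDegree ≤ k * d := by
  rw [f.as_sum, map_sum]
  refine natDegree_sum_le_of_forall_le _ _ fun α hα => ?_
  rw [aeval_monomial, ← Finsupp.prod_map_toMultiset, Polynomial.algebraMap_apply]
  refine natDegree_C_mul_le _ _ |>.trans <| natDegree_multiset_prod_le _ |>.trans ?_
  rw [Multiset.map_map, mul_comm, ← card_toMultiset_of_isHomogeneous hf hα, ← smul_eq_mul,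
    ← Multiset.card_map (natDegree ∘ L)]
  exact Multiset.sum_le_card_nsmul _ _ (Multiset.forall_mem_map_iff.mpr fun i _ => hL i)

lemma coeff_aeval_of_isHomogeneous (hf : f.IsHomogeneous d) (hL : ∀ i, (L i).natDegree ≤ k) :
    (aeval L f).coeff (k * d) = aeval (fun i => (L i).coeff k) f := by
  rw [f.as_sum, map_sum, map_sum, finsetSum_coeff]
  refine Finset.sum_congr rfl fun α hα => ?_
  rw [aeval_monomial, aeval_monomial, ← Finsupp.prod_map_toMultiset,
    ← Finsupp.prod_map_toMultiset, Polynomial.algebraMap_apply, Polynomial.coeff_C_mul, mul_comm k,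
    ← card_toMultiset_of_isHomogeneous hf hα, ← Multiset.card_map L,
    coeff_multiset_prod_of_natDegree_le _ _ (Multiset.forall_mem_map_iff.mpr fun i _ => hL i),
    Multiset.map_map]
  rfl

noncomputable def restrictLine (f : MvPolynomial σ R) (a b : σ → A) : A[X] :=
  aeval (fun i => Polynomial.C (a i) + Polynomial.C (b i) * Polynomial.X) f

lemma eval_restrictLine (f : MvPolynomial σ R) (a b : σ → A) (t : A) :
    (restrictLine f a b).eval t = aeval (a + t • b) f := by
  induction f using MvPolynomial.induction_on with
  | C c => simp [restrictLine]
  | add p q hp hq => simp_all [restrictLine]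
  | mul_X p i hp =>
    simp only [restrictLine, map_mul, aeval_X, Polynomial.eval_mul, Polynomial.eval_add,
      Polynomial.eval_C, Polynomial.eval_X] at hp ⊢
    simp only [hp, Pi.add_apply, Pi.smul_apply, smul_eq_mul, mul_comm t]

lemma map_restrictLine {B : Type*} [CommSemiring B] [Algebra A B] [Algebra R B]
    [IsScalarTower R A B] (f : MvPolynomial σ R) (a b : σ → A) :
    (restrictLine f a b).map (algebraMap A B) =
      restrictLine f (algebraMap A B ∘ a) (algebraMap A B ∘ b) := by
  induction f using MvPolynomial.induction_on with
  | C c => simp [restrictLine, ← IsScalarTower.algebraMap_apply]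
  | add p q hp hq => simp_all [restrictLine]
  | mul_X p i hp => simp_all [restrictLine]

lemma continuous_coeff_restrictLine [TopologicalSpace A] [IsTopologicalSemiring A] {T : Type*}
    [TopologicalSpace T] (f : MvPolynomial σ R) {a b : T → σ → A} (ha : Continuous a)
    (hb : Continuous b) (m : ℕ) : Continuous fun t => (restrictLine f (a t) (b t)).coeff m := by
  induction f using MvPolynomial.induction_on generalizing m with
  | C c => simpa [restrictLine, Polynomial.coeff_C] using continuous_const
  | add p q hp hq =>
    simp only [restrictLine, map_add, Polynomial.coeff_add] at hp hq ⊢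
    exact (hp m).add (hq m)
  | mul_X p i hp =>
    simp only [restrictLine, map_mul, aeval_X, Polynomial.coeff_mul] at hp ⊢
    refine continuous_finsetSum _ fun j _ => (hp _).mul ?_
    simp only [Polynomial.coeff_add, Polynomial.coeff_C, Polynomial.coeff_C_mul_X]
    split_ifs <;> fun_prop

lemma degree_restrictLine (hf : f.IsHomogeneous d) (a : σ → A) {b : σ → A}
    (hb : aeval b f ≠ 0) : (restrictLine f a b).degree = d := by
  have hL : ∀ i, (Polynomial.C (a i) + Polynomial.C (b i) * Polynomial.X).natDegree ≤ 1 :=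
    fun i => by compute_degree!
  have hdeg := natDegree_aeval_le_of_isHomogeneous hf hL
  have hcoeff := coeff_aeval_of_isHomogeneous hf hL
  simp only [one_mul, Polynomial.coeff_add, Polynomial.coeff_C, Polynomial.coeff_C_mul_X,
    one_ne_zero, ↓reduceIte, zero_add] at hdeg hcoeff
  exact degree_eq_of_le_of_coeff_ne_zero (natDegree_le_iff_degree_le.mp hdeg)
    (by rwa [restrictLine, hcoeff])

lemma IsHomogeneous.eval_smul (hf : f.IsHomogeneous d) (c : R) (x : σ → R) :
    eval (c • x) f = c ^ d * eval x f := by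
  rw [eval_eq, eval_eq, Finset.mul_sum]
  refine Finset.sum_congr rfl fun α hα => ?_
  simp only [Pi.smul_apply, smul_eq_mul, mul_pow, Finset.prod_mul_distrib,
    Finset.prod_pow_eq_pow_sum, ← hf.degree_eq_sum_deg_support hα]
  ring

end MvPolynomial

section Hyperbolic

open Complex ComplexConjugate

lemma MvPolynomial.aeval_ofReal_comp {σ : Type*} (h : MvPolynomial σ ℝ) (x : σ → ℝ) :
    aeval (ofReal ∘ x : σ → ℂ) h = MvPolynomial.eval x h := by
  simpa using MvPolynomial.aeval_algebraMap_apply ℂ x h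

lemma MvPolynomial.aeval_conj_comp {σ : Type*} (h : MvPolynomial σ ℝ) (z : σ → ℂ) :
    aeval (conj ∘ z : σ → ℂ) h = conj (aeval z h) := by
  induction h using MvPolynomial.induction_on <;> simp_all

lemma ofReal_comp_add_smul {σ : Type*} (x v : σ → ℝ) (r : ℝ) :
    (ofReal ∘ (x + r • v) : σ → ℂ) = ofReal ∘ x + (r : ℂ) • ofReal ∘ v := by
  ext i
  simp

variable {n d : ℕ} {h : MvPolynomial (Fin n) ℝ} {e : Fin n → ℝ}

lemma realRooted_univPoly_iff (w v : Fin n → ℝ) :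
    RealRooted (univPoly h w v) ↔
      ∀ τ : ℂ, aeval (ofReal ∘ v + τ • ofReal ∘ w) h = 0 → τ.im = 0 := by
  rw [RealRooted, show univPoly h w v = restrictLine h v w from rfl, map_restrictLine]
  simp only [IsRoot.def, eval_restrictLine, coe_algebraMap]

lemma eval_univPoly (w v : Fin n → ℝ) (t : ℝ) :
    (univPoly h w v).eval t = MvPolynomial.eval (v + t • w) h :=
  eval_restrictLine h v w t

lemma eval_add_smul_of_isHomogeneous (hhom : h.IsHomogeneous d) (v : Fin n → ℝ) {t : ℝ}
    (ht : t ≠ 0) :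
    MvPolynomial.eval (v + t • e) h = t ^ d * MvPolynomial.eval (e + t⁻¹ • v) h := by
  rw [← hhom.eval_smul, smul_add, smul_smul, mul_inv_cancel₀ ht, one_smul, add_comm]

lemma mem_hypCone_iff (hhom : h.IsHomogeneous d) (he : MvPolynomial.eval e h ≠ 0)
    (v : Fin n → ℝ) :
    v ∈ hypCone h e ↔ ∀ s : ℝ, 0 ≤ s → MvPolynomial.eval (e + s • v) h ≠ 0 := by
  simp only [hypCone, Set.mem_ofPred_eq, IsRoot.def, eval_univPoly]
  constructor
  · intro hv s hs hzero
    rcases hs.eq_or_lt with rfl | hs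
    · exact he (by simpa using hzero)
    · refine (inv_pos.mpr hs).not_ge (hv s⁻¹ ?_)
      rw [eval_add_smul_of_isHomogeneous hhom v (inv_ne_zero hs.ne'), inv_inv, hzero, mul_zero]
  · intro hv t ht
    by_contra! htpos
    rw [eval_add_smul_of_isHomogeneous hhom v htpos.ne'] at ht
    exact hv t⁻¹ (inv_nonneg.mpr htpos.le)
      ((mul_eq_zero.mp ht).resolve_left (pow_ne_zero _ htpos.ne'))

lemma smul_mem_hypCone (hhom : h.IsHomogeneous d) (he : MvPolynomial.eval e h ≠ 0) {c : ℝ}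
    (hc : 0 ≤ c) {x : Fin n → ℝ} (hx : x ∈ hypCone h e) : c • x ∈ hypCone h e := by
  refine (mem_hypCone_iff hhom he _).mpr fun s hs => ?_
  rw [smul_smul]
  exact (mem_hypCone_iff hhom he x).mp hx _ (mul_nonneg hs hc)

lemma Hyperbolic.eval_add_re_smul_eq_zero {w x : Fin n → ℝ} (hw : Hyperbolic h w) {z : ℂ}
    (hz : aeval (ofReal ∘ x + z • ofReal ∘ w) h = 0) :
    MvPolynomial.eval (x + z.re • w) h = 0 := by
  have hz_re : (z.re : ℂ) = z :=
    Complex.ext rfl (by simp [(realRooted_univPoly_iff w x).mp (hw.2 x) z hz])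
  rwa [← hz_re, ← ofReal_comp_add_smul, aeval_ofReal_comp, ofReal_eq_zero] at hz

lemma Hyperbolic.im_lt_zero_of_aeval_eq_zero (hhyp : Hyperbolic h e) (hhom : h.IsHomogeneous d)
    {w : Fin n → ℝ} (hw : ∀ u ∈ segment ℝ e w, MvPolynomial.eval u h ≠ 0) (x : Fin n → ℝ)
    {s : ℝ} (hs : 0 < s) {τ : ℂ}
    (hτ : aeval (ofReal ∘ x + (s * I) • ofReal ∘ e + τ • ofReal ∘ w) h = 0) : τ.im < 0 := by
  set w' : ℝ → Fin n → ℝ := fun t => (1 - t) • e + t • w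
  have hw' : ∀ t ∈ Icc (0 : ℝ) 1, MvPolynomial.eval (w' t) h ≠ 0 := fun t ht =>
    hw _ ⟨1 - t, t, by linarith [ht.2], ht.1, by ring, rfl⟩
  refine mem_of_isRoot_of_homotopy
    (P := fun t => restrictLine h (ofReal ∘ x + (s * I) • ofReal ∘ e) (ofReal ∘ w' t))
    (U := {z | z.im < 0}) (V := {z | 0 < z.im})
    (isOpen_lt continuous_im continuous_const) (isOpen_lt continuous_const continuous_im)
    (Set.disjoint_left.mpr fun z (h1 : z.im < 0) (h2 : 0 < z.im) => lt_asymm h1 h2)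
    (continuous_coeff_restrictLine h continuous_const (by fun_prop))
    (fun t ht => degree_restrictLine hhom _ (by rw [aeval_ofReal_comp]; exact_mod_cast hw' t ht))
    ?_ ?_ (by simpa [IsRoot.def, eval_restrictLine, w'] using hτ)
  · intro t ht z hz
    rw [IsRoot.def, eval_restrictLine] at hz
    rcases lt_trichotomy z.im 0 with hlt | hzero | hgt
    · exact Or.inl hlt
    · have hz_re : (z.re : ℂ) = z := Complex.ext rfl (by simp [hzero])
      have := (realRooted_univPoly_iff e (x + z.re • w' t)).mp (hhyp.2 _) (s * I)
        (by rwa [ofReal_comp_add_smul, hz_re, add_right_comm])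
      simp [hs.ne'] at this
    · exact Or.inr hgt
  · intro z hz
    simp only [IsRoot.def, eval_restrictLine, w', sub_zero, one_smul, zero_smul, add_zero] at hz
    rw [add_assoc, ← add_smul] at hz
    have := (realRooted_univPoly_iff e x).mp (hhyp.2 x) _ hz
    simp only [add_im, mul_im, ofReal_re, I_im, mul_one, ofReal_im, I_re, mul_zero,
      add_zero] at this
    show z.im < 0
    linarith

theorem Hyperbolic.of_segment (hhyp : Hyperbolic h e) (hhom : h.IsHomogeneous d)
    {w : Fin n → ℝ} (hw : ∀ u ∈ segment ℝ e w, MvPolynomial.eval u h ≠ 0) : Hyperbolic h w := by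
  have hw₀ : MvPolynomial.eval w h ≠ 0 := hw w (right_mem_segment ℝ e w)
  have hdeg (a : Fin n → ℂ) : (restrictLine h a (ofReal ∘ w)).degree = d :=
    degree_restrictLine hhom a (by rw [aeval_ofReal_comp]; exact_mod_cast hw₀)
  refine ⟨hw₀, fun x => (realRooted_univPoly_iff w x).mpr fun τ hτ => ?_⟩
  have him_nonpos : ∀ τ : ℂ, aeval (ofReal ∘ x + τ • ofReal ∘ w) h = 0 → τ.im ≤ 0 := by
    intro τ hτ
    let a : ℝ → Fin n → ℂ := fun s => ofReal ∘ x + (s * I) • ofReal ∘ e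
    have ha0 : a 0 = ofReal ∘ x := by simp [a]
    have hlim (j : ℕ) :
        Tendsto (fun k : ℕ => (restrictLine h (a (1 / (k + 1))) (ofReal ∘ w)).coeff j)
          atTop (𝓝 ((restrictLine h (ofReal ∘ x) (ofReal ∘ w)).coeff j)) := by
      have hc := (continuous_coeff_restrictLine h (a := a) (b := fun _ => ofReal ∘ w)
        (by fun_prop) continuous_const j).tendsto 0
      rw [ha0] at hc
      exact hc.comp tendsto_one_div_add_atTop_nhds_zero_nat
    have hroots (k : ℕ) (z : ℂ)
        (hz : (restrictLine h (a (1 / (k + 1))) (ofReal ∘ w)).IsRoot z) :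
        z ∈ {z : ℂ | z.im ≤ 0} := by
      rw [IsRoot.def, eval_restrictLine] at hz
      exact (hhyp.im_lt_zero_of_aeval_eq_zero hhom hw x Nat.one_div_pos_of_nat hz).le
    have hτ' : (restrictLine h (ofReal ∘ x) (ofReal ∘ w)).IsRoot τ := by
      rwa [IsRoot.def, eval_restrictLine]
    exact mem_of_isRoot_of_tendsto_coeff (fun k => hdeg _) (hdeg _) hlim
      (isClosed_le continuous_im continuous_const) hroots hτ'
  have hconj := him_nonpos (conj τ) <| by
    rw [show ofReal ∘ x + conj τ • ofReal ∘ w = conj ∘ (ofReal ∘ x + τ • ofReal ∘ w) by ext; simp,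
      aeval_conj_comp, hτ, map_zero]
  linarith [him_nonpos τ hτ, show (conj τ).im = -τ.im from conj_im τ]

lemma Hyperbolic.eval_add_add_ne_zero (hhyp : Hyperbolic h e) (hhom : h.IsHomogeneous d)
    {u v : Fin n → ℝ} (hu : u ∈ hypCone h e) (hv : v ∈ hypCone h e) :
    MvPolynomial.eval (e + v + (e + u)) h ≠ 0 := by
  have hcone := mem_hypCone_iff hhom hhyp.1
  have hw : ∀ z ∈ segment ℝ e (e + u), MvPolynomial.eval z h ≠ 0 := by
    rintro _ ⟨a, b, -, hb, hab, rfl⟩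
    rw [smul_add, ← add_assoc, ← add_smul, hab, one_smul]
    exact (hcone u).mp hu b hb
  have hhyp_w := hhyp.of_segment hhom hw
  intro hzero
  have hroot1 : (restrictLine h (ofReal ∘ (e + (1 : ℝ) • v)) (ofReal ∘ (e + u))).IsRoot 1 := by
    rw [IsRoot.def, eval_restrictLine, ← ofReal_one, ← ofReal_comp_add_smul, one_smul, one_smul,
      aeval_ofReal_comp, hzero, ofReal_zero]
  have : (1 : ℂ).re < 0 := mem_of_isRoot_of_homotopy
    (P := fun μ => restrictLine h (ofReal ∘ (e + μ • v)) (ofReal ∘ (e + u)))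
    (U := {z | z.re < 0}) (V := {z | 0 < z.re})
    (isOpen_lt continuous_re continuous_const) (isOpen_lt continuous_const continuous_re)
    (Set.disjoint_left.mpr fun z (h1 : z.re < 0) (h2 : 0 < z.re) => lt_asymm h1 h2)
    (continuous_coeff_restrictLine h (by fun_prop) continuous_const)
    (fun μ _ => degree_restrictLine hhom _ (by rw [aeval_ofReal_comp]; exact_mod_cast hhyp_w.1))
    ?_ ?_ hroot1
  · norm_num at this
  · intro μ hμ z hz
    rw [IsRoot.def, eval_restrictLine] at hz
    have hz' := hhyp_w.eval_add_re_smul_eq_zero hz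
    rcases lt_trichotomy z.re 0 with hlt | hre | hgt
    · exact Or.inl hlt
    · rw [hre, zero_smul, add_zero] at hz'
      exact absurd hz' ((hcone v).mp hv μ hμ.1)
    · exact Or.inr hgt
  · intro z hz
    rw [IsRoot.def, eval_restrictLine] at hz
    have hz' := hhyp_w.eval_add_re_smul_eq_zero hz
    show z.re < 0
    by_contra! hre
    have hpos : 0 < 1 + z.re := by linarith
    have hvec : e + z.re • (e + u) = (1 + z.re) • (e + ((1 + z.re)⁻¹ * z.re) • u) := by
      rw [smul_add (1 + z.re), smul_smul, ← mul_assoc, mul_inv_cancel₀ hpos.ne', one_mul]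
      module
    rw [zero_smul, add_zero, hvec, hhom.eval_smul] at hz'
    exact mul_ne_zero (pow_ne_zero _ hpos.ne') ((hcone u).mp hu _ (by positivity)) hz'

lemma Hyperbolic.add_mem_hypCone (hhyp : Hyperbolic h e) (hhom : h.IsHomogeneous d)
    {u v : Fin n → ℝ} (hu : u ∈ hypCone h e) (hv : v ∈ hypCone h e) : u + v ∈ hypCone h e := by
  refine (mem_hypCone_iff hhom hhyp.1 _).mpr fun s hs => ?_
  have h2s : (0 : ℝ) ≤ 2 * s := by positivity
  have key := hhyp.eval_add_add_ne_zero hhom (smul_mem_hypCone hhom hhyp.1 h2s hu)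
    (smul_mem_hypCone hhom hhyp.1 h2s hv)
  rw [show e + (2 * s) • v + (e + (2 * s) • u) = (2 : ℝ) • (e + s • (u + v)) by module,
    hhom.eval_smul] at key
  exact right_ne_zero_of_mul key

end Hyperbolic

theorem stmt5 {n d : ℕ} (h : MvPolynomial (Fin n) ℝ) (hhom : h.IsHomogeneous d)
    (e : Fin n → ℝ) (hhyp : Hyperbolic h e) :
    Convex ℝ (hypCone h e) ∧
      ∀ c : ℝ, 0 ≤ c → ∀ x ∈ hypCone h e, c • x ∈ hypCone h e := by
  have hsmul {c : ℝ} (hc : 0 ≤ c) {x : Fin n → ℝ} (hx : x ∈ hypCone h e) : c • x ∈ hypCone h e :=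
    smul_mem_hypCone hhom hhyp.1 hc hx
  exact ⟨fun u hu v hv a b ha hb _ => hhyp.add_mem_hypCone hhom (hsmul ha hu) (hsmul hb hv),
    fun c hc x hx => hsmul hc hx⟩
end

section
/- Let h be homogeneous of degree d, hyperbolic with respect to e, A₁,…,Aₙ real symmetric m×m matrices, f ∈ ℝ[x]ᵐ a vector of homogeneous polynomials of degree d−1, and v ∈ ℝᵐ such that A(x)·f = h·v where A(x) = ∑ xᵢAᵢ. Set p = vᵀf. Then for each i = 1,…,n, (∂h/∂xᵢ)·p − h·(∂p/∂xᵢ) = fᵀ·Aᵢ·f. -/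
open MvPolynomial Polynomial Matrix

theorem stmt6 {n m d : ℕ} (h : MvPolynomial (Fin n) ℝ) (hhom : h.IsHomogeneous d)
    (e : Fin n → ℝ) (hhyp : Hyperbolic h e)
    (A : Fin n → Matrix (Fin m) (Fin m) ℝ) (hsymm : ∀ i, (A i).IsSymm)
    (f : Fin m → MvPolynomial (Fin n) ℝ) (hf : ∀ j, (f j).IsHomogeneous (d - 1))
    (v : Fin m → ℝ)
    (heq : ∀ j, (∑ k, (∑ i, MvPolynomial.C (A i j k) * MvPolynomial.X i) * f k)
      = h * MvPolynomial.C (v j)) :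
    ∀ i, (MvPolynomial.pderiv i h) * (∑ j, MvPolynomial.C (v j) * f j)
        - h * MvPolynomial.pderiv i (∑ j, MvPolynomial.C (v j) * f j)
      = ∑ j, ∑ k, f j * MvPolynomial.C (A i j k) * f k :=
  by
  intro i
  classical
  set B : Fin m → Fin m → MvPolynomial (Fin n) ℝ :=
    fun j k => ∑ i', MvPolynomial.C (A i' j k) * MvPolynomial.X i' with hBdef
  have hBsymm : ∀ j k, B j k = B k j := by
    intro j k
    exact Finset.sum_congr rfl fun i' _ => by rw [(hsymm i').apply j k]
  have hdB : ∀ j k, MvPolynomial.pderiv i (B j k) = MvPolynomial.C (A i j k) := by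
    intro j k
    rw [hBdef]
    simp only [map_sum, pderiv_mul, pderiv_C, zero_mul, zero_add]
    rw [Finset.sum_eq_single i]
    · simp
    · intro b _ hb; rw [pderiv_X_of_ne hb]; ring
    · intro hi; exact absurd (Finset.mem_univ i) hi
  have h1 : ∀ j, (∑ k, (MvPolynomial.C (A i j k) * f k + B j k * MvPolynomial.pderiv i (f k)))
      = MvPolynomial.pderiv i h * MvPolynomial.C (v j) := by
    intro j
    have := congrArg (MvPolynomial.pderiv i) (heq j)
    rw [map_sum, pderiv_mul, pderiv_C, mul_zero, add_zero] at this
    rw [← this]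
    exact Finset.sum_congr rfl fun k _ => by rw [pderiv_mul, hdB]
  set T : MvPolynomial (Fin n) ℝ :=
    ∑ j, ∑ k, f j * (B j k * MvPolynomial.pderiv i (f k)) with hT
  have key1 : MvPolynomial.pderiv i h * (∑ j, MvPolynomial.C (v j) * f j)
      = (∑ j, ∑ k, f j * MvPolynomial.C (A i j k) * f k) + T := by
    rw [Finset.mul_sum, hT, ← Finset.sum_add_distrib]
    refine Finset.sum_congr rfl fun j _ => ?_
    have : MvPolynomial.pderiv i h * (MvPolynomial.C (v j) * f j)
        = (∑ k, (MvPolynomial.C (A i j k) * f k + B j k * MvPolynomial.pderiv i (f k))) * f j := by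
      rw [h1 j]; ring
    rw [this, Finset.sum_mul, ← Finset.sum_add_distrib]
    exact Finset.sum_congr rfl fun k _ => by ring
  have key2 : h * MvPolynomial.pderiv i (∑ j, MvPolynomial.C (v j) * f j) = T := by
    rw [map_sum]
    have step : ∀ j : Fin m, h * MvPolynomial.pderiv i (MvPolynomial.C (v j) * f j)
        = ∑ k, B j k * f k * MvPolynomial.pderiv i (f j) := by
      intro j
      rw [pderiv_mul, pderiv_C, zero_mul, zero_add, ← Finset.sum_mul, heq j]
      ring
    rw [Finset.mul_sum]
    calc (∑ j, h * MvPolynomial.pderiv i (MvPolynomial.C (v j) * f j))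
        = ∑ j, ∑ k, B j k * f k * MvPolynomial.pderiv i (f j) :=
          Finset.sum_congr rfl fun j _ => step j
      _ = ∑ k, ∑ j, B j k * f k * MvPolynomial.pderiv i (f j) := Finset.sum_comm
      _ = T := by
          rw [hT]
          refine Finset.sum_congr rfl fun j _ => Finset.sum_congr rfl fun k _ => ?_
          rw [hBsymm k j]; ring
  rw [key1, key2]; ring
end
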